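/- arXiv:1804.07615 — 3 statements merged into one kernel-verified Lean document; each statement's English description precedes it below -/
import Mathlib

section
/- Let q be a pure unit quaternion and L = spanℝ{1, q} ⊆ ℍ. For any two unit quaternions a, b, the left translates a·L and b·L are either equal or intersect only in {0}. Moreover, the family {a·L : a a unit quaternion} covers all of ℍ. -/
/-!
`L = spanℝ{1, q}` is closed under multiplication, since `q² = 2 re(q) q - |q|²`, so it is a
finite-dimensional subalgebra of the division algebra `ℍ` and therefore a subfield `K`. Left
translates of a subfield behave like cosets: if `a u = b v ≠ 0` with `u, v ∈ K`, then
`b = a (u v⁻¹)` with `u v⁻¹ ∈ K \ {0}`, and `u v⁻¹ K = K`. They cover `ℍ` because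
`y = (y / |y|) (|y| · 1)`.
-/

open Quaternion Set

theorem Submodule.mul_mem_span_one_pair {R A : Type*} [CommSemiring R] [Semiring A] [Algebra R A]
    {q : A} (hq : q * q ∈ span R {1, q}) {u v : A} (hu : u ∈ span R {1, q})
    (hv : v ∈ span R {1, q}) : u * v ∈ span R {1, q} := by
  have hqv : q * v ∈ span R {1, q} := by
    refine (span_le (p := (span R {1, q}).comap (LinearMap.mulLeft R q))).2 ?_ hv
    rintro x (rfl | rfl)
    · simpa using subset_span (by simp)
    · exact hq
  refine (span_le (p := (span R {1, q}).comap (LinearMap.mulRight R v))).2 ?_ hu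
  rintro x (rfl | rfl)
  · simpa using hv
  · exact hqv

theorem Subalgebra.inv_mem_of_finiteDimensional {K D : Type*} [Field K] [DivisionRing D]
    [Algebra K D] (S : Subalgebra K D) [FiniteDimensional K S] {x : D} (hx : x ∈ S) :
    x⁻¹ ∈ S := by
  obtain rfl | hx0 := eq_or_ne x 0
  · simp
  -- left multiplication by `x ≠ 0` is injective on the finite-dimensional `S`, hence onto `1`
  have hinj : Function.Injective (LinearMap.mulLeft K (⟨x, hx⟩ : S)) := fun y z h =>
    mul_left_cancel₀ (a := (⟨x, hx⟩ : S)) (by simpa [Subtype.ext_iff] using hx0) h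
  obtain ⟨y, hy⟩ := LinearMap.injective_iff_surjective.1 hinj 1
  have hxy : x * y = 1 := congrArg Subtype.val hy
  rw [inv_eq_of_mul_eq_one_right hxy]
  exact y.2

def Subalgebra.toSubfield {K D : Type*} [Field K] [DivisionRing D] [Algebra K D]
    (S : Subalgebra K D) (inv_mem : ∀ x ∈ S, x⁻¹ ∈ S) : Subfield D :=
  { S.toSubring with inv_mem' := inv_mem }

theorem Subfield.image_mul_left_of_mem {D : Type*} [DivisionRing D] (K : Subfield D) {c : D}
    (hc : c ∈ K) (hc0 : c ≠ 0) : (c * ·) '' (K : Set D) = K := by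
  refine Subset.antisymm (image_subset_iff.2 fun x hx => K.mul_mem hc hx) fun x hx => ?_
  exact ⟨c⁻¹ * x, K.mul_mem (K.inv_mem hc) hx, by simp [← mul_assoc, mul_inv_cancel₀ hc0]⟩

theorem Subfield.image_mul_left_eq_or_inter_eq_zero {D : Type*} [DivisionRing D] (K : Subfield D)
    (a b : D) :
    (a * ·) '' (K : Set D) = (b * ·) '' (K : Set D) ∨
      (a * ·) '' (K : Set D) ∩ (b * ·) '' (K : Set D) = {0} := by
  by_cases h : ∃ x ≠ 0, x ∈ (a * ·) '' (K : Set D) ∩ (b * ·) '' (K : Set D)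
  · left
    obtain ⟨x, hx0, ⟨u, hu, hux : a * u = x⟩, ⟨v, hv, hvx : b * v = x⟩⟩ := h
    subst hux
    have hu0 : u ≠ 0 := right_ne_zero_of_mul hx0
    have hv0 : v ≠ 0 := right_ne_zero_of_mul (hvx ▸ hx0)
    have hb : b = a * (u * v⁻¹) := by
      rw [← mul_assoc, ← hvx, mul_inv_cancel_right₀ hv0]
    have hbK : (b * ·) '' (K : Set D) = (a * ·) '' ((u * v⁻¹ * ·) '' K) := by
      simp only [image_image, hb, mul_assoc]
    rw [hbK, K.image_mul_left_of_mem (K.mul_mem hu (K.inv_mem hv))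
      (mul_ne_zero hu0 (inv_ne_zero hv0))]
  · right
    push Not at h
    refine Subset.antisymm (fun x hx => by_contra fun hx0 => h x hx0 hx) ?_
    rintro _ rfl
    exact ⟨⟨0, K.zero_mem, mul_zero a⟩, ⟨0, K.zero_mem, mul_zero b⟩⟩

theorem Quaternion.mul_self_mem_span_one_self (q : ℍ[ℝ]) :
    q * q ∈ Submodule.span ℝ {1, q} := by
  have hsq : q * q = (2 * q.re) • q - normSq q • 1 := by
    have h := q.self_mul_star
    rw [star_eq_two_re_sub, mul_sub, mul_coe_eq_smul] at h
    rw [← Quaternion.coe_mul_eq_smul (normSq q) 1, mul_one, ← h, sub_sub_cancel]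
  rw [hsq]
  exact Submodule.sub_mem _ (Submodule.smul_mem _ _ (Submodule.subset_span (by simp)))
    (Submodule.smul_mem _ _ (Submodule.subset_span (by simp)))

theorem iUnion_sphere_image_mul_left_eq_univ {D : Type*} [NormedRing D] [NormedAlgebra ℝ D]
    [NormOneClass D] (S : Submodule ℝ D) (h1 : (1 : D) ∈ S) :
    ⋃ a ∈ {a : D | ‖a‖ = 1}, (a * ·) '' (S : Set D) = univ := by
  refine eq_univ_of_forall fun y => ?_
  obtain rfl | hy := eq_or_ne y 0
  · exact mem_biUnion (x := 1) norm_one ⟨0, S.zero_mem, mul_zero 1⟩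
  have hny : ‖y‖ ≠ 0 := norm_ne_zero_iff.2 hy
  refine mem_biUnion (x := ‖y‖⁻¹ • y) ?_ ⟨‖y‖ • 1, S.smul_mem _ h1, ?_⟩
  · simp [norm_smul, inv_mul_cancel₀ hny]
  · simp [smul_smul, mul_inv_cancel₀ hny]

theorem left_clifford_translates_spread_general (q : Quaternion ℝ) :
    (∀ a b : Quaternion ℝ, ‖a‖ = 1 → ‖b‖ = 1 →
      (fun x => a * x) '' (Submodule.span ℝ {(1 : Quaternion ℝ), q} : Set (Quaternion ℝ)) =
        (fun x => b * x) '' (Submodule.span ℝ {(1 : Quaternion ℝ), q} : Set (Quaternion ℝ)) ∨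
      (fun x => a * x) '' (Submodule.span ℝ {(1 : Quaternion ℝ), q} : Set (Quaternion ℝ)) ∩
        (fun x => b * x) '' (Submodule.span ℝ {(1 : Quaternion ℝ), q} : Set (Quaternion ℝ)) = {0}) ∧
    (⋃ a ∈ {a : Quaternion ℝ | ‖a‖ = 1},
      (fun x => a * x) '' (Submodule.span ℝ {(1 : Quaternion ℝ), q} : Set (Quaternion ℝ))) = Set.univ := by
  have one_mem : (1 : ℍ[ℝ]) ∈ Submodule.span ℝ {1, q} := Submodule.subset_span (by simp)
  let L : Subalgebra ℝ ℍ[ℝ] := (Submodule.span ℝ {1, q}).toSubalgebra one_mem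
    fun _ _ => Submodule.mul_mem_span_one_pair q.mul_self_mem_span_one_self
  let K : Subfield ℍ[ℝ] := L.toSubfield fun _ => L.inv_mem_of_finiteDimensional
  exact ⟨fun a b _ _ => K.image_mul_left_eq_or_inter_eq_zero a b,
    iUnion_sphere_image_mul_left_eq_univ _ one_mem⟩

/-- For a pure unit quaternion `q` and `L = spanℝ{1, q}`, the left translates `a·L`, for `a`
ranging over the unit quaternions, are pairwise either equal or meeting only in `{0}`, and they
cover ℍ: the left Clifford parallel class of `L` is a spread of ℝ⁴ = ℍ. -/
theorem left_clifford_translates_spread (q : Quaternion ℝ)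
    (hpure : q.re = 0) (hunit : ‖q‖ = 1) :
    (∀ a b : Quaternion ℝ, ‖a‖ = 1 → ‖b‖ = 1 →
      (fun x => a * x) '' (Submodule.span ℝ {(1 : Quaternion ℝ), q} : Set (Quaternion ℝ)) =
        (fun x => b * x) '' (Submodule.span ℝ {(1 : Quaternion ℝ), q} : Set (Quaternion ℝ)) ∨
      (fun x => a * x) '' (Submodule.span ℝ {(1 : Quaternion ℝ), q} : Set (Quaternion ℝ)) ∩
        (fun x => b * x) '' (Submodule.span ℝ {(1 : Quaternion ℝ), q} : Set (Quaternion ℝ)) = {0}) ∧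
    (⋃ a ∈ {a : Quaternion ℝ | ‖a‖ = 1},
      (fun x => a * x) '' (Submodule.span ℝ {(1 : Quaternion ℝ), q} : Set (Quaternion ℝ))) = Set.univ :=
  left_clifford_translates_spread_general q
end

section
/- Let q be a pure unit quaternion, L = spanℝ{1, q} ⊆ ℍ, and let a, b be unit quaternions such that a·L = L·b as real subspaces of ℍ. Then either a·L = L, or a·L = L^⊥ (the orthogonal complement of L with respect to the standard inner product on ℍ). -/
/-!
Let `L = span{1, q}`. Then `L` is the centraliser of `q`, and its orthogonal complement is the
set of quaternions anticommuting with `q` (pure quaternions anticommute exactly when they are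
orthogonal). From `a·L = L·b`, both `a b⁻¹` and `a q b⁻¹` lie in `L`, hence so does
`b q b⁻¹ = (a b⁻¹)⁻¹ (a q b⁻¹)`; being pure of norm `‖q‖`, it equals `±q`. So `b` commutes or
anticommutes with `q`, and right multiplication by `b` maps `L` onto `L` or onto `Lᗮ` accordingly.
-/

open Quaternion
open scoped RealInnerProductSpace

lemma Submodule.mem_map_mulRight_iff {R D : Type*} [CommSemiring R] [DivisionRing D]
    [Algebra R D] {L : Submodule R D} {b : D} (hb : b ≠ 0) {x : D} :
    x ∈ L.map (LinearMap.mulRight R b) ↔ x * b⁻¹ ∈ L := by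
  refine ⟨?_, fun hx => ⟨x * b⁻¹, hx, inv_mul_cancel_right₀ hb x⟩⟩
  rintro ⟨y, hy, rfl⟩
  simpa [hb] using hy

namespace Quaternion

lemma re_mul_comm (x y : ℍ) : (x * y).re = (y * x).re := by
  simp only [re_mul]; ring

lemma re_mul_mul_inv (b x : ℍ) (hb : b ≠ 0) : (b * x * b⁻¹).re = x.re := by
  rw [re_mul_comm, ← mul_assoc, inv_mul_cancel₀ hb, one_mul]

lemma norm_mul_mul_inv (b x : ℍ) (hb : b ≠ 0) : ‖b * x * b⁻¹‖ = ‖x‖ := by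
  rw [norm_mul, norm_mul, norm_inv, mul_comm ‖b‖, mul_assoc,
    mul_inv_cancel₀ (norm_ne_zero_iff.2 hb), mul_one]

lemma mul_add_mul_eq_neg_inner {x y : ℍ} (hx : x.re = 0) (hy : y.re = 0) :
    x * y + y * x = ((-2 * ⟪x, y⟫ : ℝ) : ℍ) := by
  rw [inner_def]
  ext <;> simp [hx, hy] <;> ring

lemma eq_zero_of_commute_of_anticommute {q x : ℍ} (hq : q ≠ 0) (hc : x * q = q * x)
    (ha : x * q = -(q * x)) : x = 0 := by
  rw [hc] at ha
  have h : (2 : ℝ) • (q * x) = 0 := by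
    rw [two_smul]; nth_rewrite 1 [ha]; exact neg_add_cancel _
  exact (mul_eq_zero.1 ((smul_eq_zero.1 h).resolve_left two_ne_zero)).resolve_left hq

variable {q : ℍ}

lemma commute_of_mem_span_one_self {x : ℍ} (hx : x ∈ Submodule.span ℝ {1, q}) :
    Commute x q := by
  obtain ⟨s, t, rfl⟩ := Submodule.mem_span_pair.1 hx
  exact ((Commute.one_left q).smul_left s).add_left ((Commute.refl q).smul_left t)

lemma anticommute_of_mem_orthogonal_span_one_self (hq : q.re = 0) {x : ℍ}
    (hx : x ∈ (Submodule.span ℝ {1, q})ᗮ) : x * q = -(q * x) := by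
  have hx1 : ⟪(1 : ℍ), x⟫ = 0 :=
    Submodule.inner_right_of_mem_orthogonal (Submodule.subset_span (by simp)) hx
  have hxq : ⟪x, q⟫ = 0 :=
    Submodule.inner_left_of_mem_orthogonal (Submodule.subset_span (by simp)) hx
  have hxre : x.re = 0 := by simpa [inner_def] using hx1
  rw [eq_neg_iff_add_eq_zero, mul_add_mul_eq_neg_inner hxre hq, hxq]
  simp

lemma mem_span_one_self_iff_commute (hq : q.re = 0) (hq0 : q ≠ 0) {x : ℍ} :
    x ∈ Submodule.span ℝ {1, q} ↔ Commute x q := by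
  refine ⟨commute_of_mem_span_one_self, fun hxq => ?_⟩
  obtain ⟨c, hc, d, hd, rfl⟩ := (Submodule.span ℝ {1, q}).exists_add_mem_mem_orthogonal x
  have hdq : d * q = q * d := by
    simpa [Commute, SemiconjBy, add_mul, mul_add, (commute_of_mem_span_one_self hc).eq]
      using hxq
  simpa [eq_zero_of_commute_of_anticommute hq0 hdq
    (anticommute_of_mem_orthogonal_span_one_self hq hd)] using hc

lemma mem_orthogonal_span_one_self_iff_anticommute (hq : q.re = 0) (hq0 : q ≠ 0) {x : ℍ} :
    x ∈ (Submodule.span ℝ {1, q})ᗮ ↔ x * q = -(q * x) := by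
  refine ⟨anticommute_of_mem_orthogonal_span_one_self hq, fun hxq => ?_⟩
  obtain ⟨c, hc, d, hd, rfl⟩ := (Submodule.span ℝ {1, q}).exists_add_mem_mem_orthogonal x
  have hcq : c * q = -(q * c) := by
    rw [add_mul, mul_add, neg_add, anticommute_of_mem_orthogonal_span_one_self hq hd] at hxq
    exact add_right_cancel hxq
  simpa [eq_zero_of_commute_of_anticommute hq0 (commute_of_mem_span_one_self hc).eq hcq]
    using hd

lemma eq_or_eq_neg_of_mem_span_one_self (hq : q.re = 0) (hq0 : q ≠ 0) {p : ℍ}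
    (hp : p ∈ Submodule.span ℝ {1, q}) (hpre : p.re = 0) (hpq : ‖p‖ = ‖q‖) :
    p = q ∨ p = -q := by
  obtain ⟨s, t, rfl⟩ := Submodule.mem_span_pair.1 hp
  obtain rfl : s = 0 := by simpa [hq] using hpre
  have ht : |t| = 1 := by simpa [norm_smul, norm_ne_zero_iff.2 hq0] using hpq
  rcases (abs_eq zero_le_one).1 ht with rfl | rfl <;> simp

lemma map_mulRight_span_one_self_of_commute (hq : q.re = 0) (hq0 : q ≠ 0) {b : ℍ}
    (hb : b ≠ 0) (hbq : Commute b q) :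
    (Submodule.span ℝ {1, q}).map (LinearMap.mulRight ℝ b) = Submodule.span ℝ {1, q} := by
  ext x
  rw [Submodule.mem_map_mulRight_iff hb, mem_span_one_self_iff_commute hq hq0,
    mem_span_one_self_iff_commute hq hq0]
  refine ⟨fun h => ?_, fun h => h.mul_left hbq.inv_left₀⟩
  simpa [hb] using h.mul_left hbq

lemma map_mulRight_span_one_self_of_anticommute (hq : q.re = 0) (hq0 : q ≠ 0) {b : ℍ}
    (hb : b ≠ 0) (hbq : b * q = -(q * b)) :
    (Submodule.span ℝ {1, q}).map (LinearMap.mulRight ℝ b) = (Submodule.span ℝ {1, q})ᗮ := by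
  have hbq' : b⁻¹ * q = -(q * b⁻¹) :=
    calc b⁻¹ * q = b⁻¹ * (q * b) * b⁻¹ := by simp [mul_assoc, hb]
      _ = -(q * b⁻¹) := by rw [neg_eq_iff_eq_neg.1 hbq.symm]; simp [hb]
  ext x
  rw [Submodule.mem_map_mulRight_iff hb, mem_span_one_self_iff_commute hq hq0,
    mem_orthogonal_span_one_self_iff_anticommute hq hq0, Commute, SemiconjBy, mul_assoc, hbq',
    mul_neg, ← mul_assoc, ← mul_assoc, ← neg_mul, mul_left_inj' (inv_ne_zero hb),
    neg_eq_iff_eq_neg]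

end Quaternion

/-- If `q` is a pure unit quaternion, `L = spanℝ{1, q}`, and `a`, `b` are unit quaternions with
`a·L = L·b`, then either `a·L = L` or `a·L = Lᗮ`. -/
theorem left_translate_eq_right_translate (q : Quaternion ℝ)
    (hpure : q.re = 0) (hunit : ‖q‖ = 1) (a b : Quaternion ℝ)
    (ha : ‖a‖ = 1) (hb : ‖b‖ = 1)
    (hab : (Submodule.span ℝ {(1 : Quaternion ℝ), q}).map (LinearMap.mulLeft ℝ a) =
        (Submodule.span ℝ {(1 : Quaternion ℝ), q}).map (LinearMap.mulRight ℝ b)) :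
    (Submodule.span ℝ {(1 : Quaternion ℝ), q}).map (LinearMap.mulLeft ℝ a) =
        Submodule.span ℝ {(1 : Quaternion ℝ), q} ∨
    (Submodule.span ℝ {(1 : Quaternion ℝ), q}).map (LinearMap.mulLeft ℝ a) =
        (Submodule.span ℝ {(1 : Quaternion ℝ), q})ᗮ := by
  have hq0 : q ≠ 0 := norm_ne_zero_iff.1 (by simp [hunit])
  have ha0 : a ≠ 0 := norm_ne_zero_iff.1 (by simp [ha])
  have hb0 : b ≠ 0 := norm_ne_zero_iff.1 (by simp [hb])
  have htwist : ∀ y ∈ Submodule.span ℝ {1, q}, Commute (a * y * b⁻¹) q := fun y hy =>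
    (mem_span_one_self_iff_commute hpure hq0).1 <| (Submodule.mem_map_mulRight_iff hb0).1 <|
      hab ▸ Submodule.mem_map_of_mem hy
  have hconj : Commute (b * q * b⁻¹) q := by
    have h := (htwist 1 (Submodule.subset_span (by simp))).inv_left₀.mul_left
      (htwist q (Submodule.subset_span (by simp)))
    rwa [show (a * 1 * b⁻¹)⁻¹ * (a * q * b⁻¹) = b * q * b⁻¹ by simp [mul_assoc, ha0]] at h
  rw [hab]
  rcases eq_or_eq_neg_of_mem_span_one_self hpure hq0
    ((mem_span_one_self_iff_commute hpure hq0).2 hconj) (by rw [re_mul_mul_inv _ _ hb0, hpure])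
    (norm_mul_mul_inv _ _ hb0) with h | h
  · exact .inl <| map_mulRight_span_one_self_of_commute hpure hq0 hb0
      ((mul_inv_eq_iff_eq_mul₀ hb0).1 h)
  · exact .inr <| map_mulRight_span_one_self_of_anticommute hpure hq0 hb0
      (by rw [(mul_inv_eq_iff_eq_mul₀ hb0).1 h, neg_mul])
end

section
/- Identify ℝ⁴ with ℂ² and fix λ = p + qi ∈ ℂ with μ := |λ| > 0. Consider the complex line W_λ = {(x + yi, λ(x + yi)) : x, y ∈ ℝ} = {(x, y, px − qy, qx + py) : x, y ∈ ℝ} ⊆ ℝ⁴, and let ℓ_λ ⊆ ℝ³ be its image in the affine chart dividing by the third coordinate (on vectors with px − qy ≠ 0). Then the minimum distance from points of ℓ_λ to the z-axis is 1/μ, attained at the point (p/μ², −q/μ², 0); in particular the closest point lies in the plane z = 0 for every λ ≠ 0. -/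
/-!
Normalise a point of the line by its third coordinate: `u = x/d`, `v = y/d` with
`d = p x - q y`, so that `p u - q v = 1` and the chart point is `(u, v, q u + p v)`.
Lagrange's identity `|λ|² |u + v i|² = |λ (u + v i)|²` then reads
`(p² + q²)(u² + v²) = 1 + (q u + p v)²`, so the squared distance to the z-axis is at least
`1/|λ|²`, with equality exactly when the third coordinate vanishes, as it does for
`x + y i = conj λ`.
-/

namespace RegularSpread

variable {p q u v : ℝ}

theorem normSq_mul_normSq_eq_one_add_sq (h : p * u - q * v = 1) :
    (p ^ 2 + q ^ 2) * (u ^ 2 + v ^ 2) = 1 + (q * u + p * v) ^ 2 := by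
  linear_combination (p * u - q * v + 1) * h

theorem normSq_pos_of_eq_one (h : p * u - q * v = 1) : 0 < p ^ 2 + q ^ 2 := by
  have key := normSq_mul_normSq_eq_one_add_sq h
  have : p ^ 2 + q ^ 2 ≠ 0 := fun h0 => by nlinarith [sq_nonneg (q * u + p * v)]
  positivity

theorem one_div_sqrt_le_sqrt (h : p * u - q * v = 1) :
    1 / √(p ^ 2 + q ^ 2) ≤ √(u ^ 2 + v ^ 2) := by
  have hS := normSq_pos_of_eq_one h
  rw [one_div, ← Real.sqrt_inv]
  refine Real.sqrt_le_sqrt ?_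
  rw [inv_le_iff_one_le_mul₀' hS, normSq_mul_normSq_eq_one_add_sq h]
  nlinarith [sq_nonneg (q * u + p * v)]

theorem eq_zero_of_sqrt_eq_one_div_sqrt (h : p * u - q * v = 1)
    (heq : √(u ^ 2 + v ^ 2) = 1 / √(p ^ 2 + q ^ 2)) : q * u + p * v = 0 := by
  have hS := normSq_pos_of_eq_one h
  have hsq : u ^ 2 + v ^ 2 = 1 / (p ^ 2 + q ^ 2) := by
    rw [← Real.sqrt_inj (by positivity) (by positivity), heq, Real.sqrt_div' _ hS.le,
      Real.sqrt_one]
  have key := normSq_mul_normSq_eq_one_add_sq h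
  rw [hsq, mul_one_div_cancel hS.ne'] at key
  nlinarith [sq_nonneg (q * u + p * v)]

theorem chart_normalized {x y : ℝ} (hd : p * x - q * y ≠ 0) :
    p * (x / (p * x - q * y)) - q * (y / (p * x - q * y)) = 1 := by
  field_simp

end RegularSpread

open RegularSpread in
/-- The regular (complex) spread is concentric: for `λ = p + qi ≠ 0` in ℂ, the affine chart
image of the complex line `{(x, y, px − qy, qx + py)}` (dividing by the third coordinate) has
minimum distance `1/|λ|` to the z-axis, attained at the point `(p/|λ|², −q/|λ|², 0)`, which
lies in the plane `z = 0`. -/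
theorem regular_spread_concentric (p q : ℝ) (hpq : p ^ 2 + q ^ 2 ≠ 0) :
    (∀ x y : ℝ, p * x - q * y ≠ 0 →
      1 / Real.sqrt (p ^ 2 + q ^ 2) ≤
        Real.sqrt ((x / (p * x - q * y)) ^ 2 + (y / (p * x - q * y)) ^ 2)) ∧
    (∃ x y : ℝ, p * x - q * y ≠ 0 ∧
      ((x / (p * x - q * y), y / (p * x - q * y), (q * x + p * y) / (p * x - q * y)) :
          ℝ × ℝ × ℝ) =
        (p / (p ^ 2 + q ^ 2), -q / (p ^ 2 + q ^ 2), 0)) ∧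
    (∀ x y : ℝ, p * x - q * y ≠ 0 →
      Real.sqrt ((x / (p * x - q * y)) ^ 2 + (y / (p * x - q * y)) ^ 2) =
          1 / Real.sqrt (p ^ 2 + q ^ 2) →
      (q * x + p * y) / (p * x - q * y) = 0) := by
  have hd : p * p - q * -q = p ^ 2 + q ^ 2 := by ring
  refine ⟨fun x y hxy => one_div_sqrt_le_sqrt (chart_normalized hxy),
    ⟨p, -q, hd ▸ hpq, ?_⟩, fun x y hxy heq => ?_⟩
  · rw [hd, show q * p + p * -q = 0 by ring, zero_div]
  · rw [add_div, mul_div_assoc, mul_div_assoc]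
    exact eq_zero_of_sqrt_eq_one_div_sqrt (chart_normalized hxy) heq
end
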